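/- Let φ : ℝ → ℝ be concave and integrable against Gaussians, and σ₀ ∈ (0,1]. Then sup_{σ₀ ≤ σ ≤ 1} E_{N(0,σ²t)}[φ] = E_{N(0,σ₀²t)}[φ], i.e., for concave φ the G-normal expectation is the Gaussian expectation with the smallest variance σ₀²t. -/

import Mathlib

open MeasureTheory Real

/-!
The Gaussian expectation `E_{N(0,v)}[φ]` equals `E[φ(√v Z)]` for a standard normal `Z`. For
`0 < s ≤ 1`, concavity of `φ` gives `φ(y) + φ(-y) ≤ φ(s y) + φ(-s y)`, since `±s y` are convex
combinations of `y` and `-y` with swapped weights. Integrating this against the even density of `Z`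
shows that `v ↦ E_{N(0,v)}[φ]` is antitone, so the supremum over `σ ∈ [σ₀, 1]` is attained at `σ₀`.
-/

lemma ConcaveOn.add_comp_neg_le_add_comp_neg_smul {E : Type*} [AddCommGroup E] [Module ℝ E]
    {φ : E → ℝ} (hφ : ConcaveOn ℝ Set.univ φ) {s : ℝ} (hs₀ : 0 ≤ s) (hs₁ : s ≤ 1) (y : E) :
    φ y + φ (-y) ≤ φ (s • y) + φ (-(s • y)) := by
  have hpos : 0 ≤ (1 + s) / 2 := by linarith
  have hneg : 0 ≤ (1 - s) / 2 := by linarith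
  have h₁ := hφ.2 (Set.mem_univ y) (Set.mem_univ (-y)) hpos hneg (by ring)
  have h₂ := hφ.2 (Set.mem_univ y) (Set.mem_univ (-y)) hneg hpos (by ring)
  rw [show ((1 + s) / 2) • y + ((1 - s) / 2) • -y = s • y by module, smul_eq_mul,
    smul_eq_mul] at h₁
  rw [show ((1 - s) / 2) • y + ((1 + s) / 2) • -y = -(s • y) by module, smul_eq_mul,
    smul_eq_mul] at h₂
  linarith

lemma integral_le_integral_of_add_comp_neg_le {G : Type*} [MeasurableSpace G] [AddGroup G]
    [MeasurableNeg G] {μ : Measure G} [μ.IsNegInvariant] {f g : G → ℝ}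
    (hf : Integrable f μ) (hg : Integrable g μ) (h : ∀ x, f x + f (-x) ≤ g x + g (-x)) :
    ∫ x, f x ∂μ ≤ ∫ x, g x ∂μ := by
  have hsum := integral_mono (f := fun x => f x + f (-x)) (g := fun x => g x + g (-x))
    (hf.add hf.comp_neg) (hg.add hg.comp_neg) h
  rw [integral_add hf hf.comp_neg, integral_add hg hg.comp_neg, integral_neg_eq_self,
    integral_neg_eq_self] at hsum
  linarith

/-- `E_{N(0,v)}[φ]`, written through the Gaussian density. -/
noncomputable def gaussianExpectation (φ : ℝ → ℝ) (v : ℝ) : ℝ :=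
  1 / √(2 * π * v) * ∫ x, φ x * exp (-x ^ 2 / (2 * v))

lemma gaussianExpectation_eq_integral_comp_mul (φ : ℝ → ℝ) {v : ℝ} (hv : 0 < v) :
    gaussianExpectation φ v = 1 / √(2 * π) * ∫ u, φ (√v * u) * exp (-u ^ 2 / 2) := by
  have hs : 0 < √v := sqrt_pos.2 hv
  have hexp (u : ℝ) : exp (-(√v * u) ^ 2 / (2 * v)) = exp (-u ^ 2 / 2) := by
    rw [mul_pow, sq_sqrt hv.le]
    field_simp
  have hsub := Measure.integral_comp_mul_left (fun x => φ x * exp (-x ^ 2 / (2 * v))) √v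
  simp only [hexp] at hsub
  rw [gaussianExpectation, hsub, smul_eq_mul, abs_of_pos (inv_pos.2 hs), sqrt_mul (by positivity),
    ← mul_assoc]
  field_simp

lemma integrable_comp_mul_mul_exp_neg_sq_div_two {φ : ℝ → ℝ}
    (hint : ∀ v : ℝ, 0 < v → Integrable (fun x : ℝ => φ x * exp (-x ^ 2 / (2 * v))))
    {a : ℝ} (ha : 0 < a) :
    Integrable (fun u => φ (a * u) * exp (-u ^ 2 / 2)) := by
  refine ((hint (a ^ 2) (by positivity)).comp_mul_left' ha.ne').congr (.of_forall fun u => ?_)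
  field_simp

lemma ConcaveOn.gaussianExpectation_antitoneOn {φ : ℝ → ℝ} (hφ : ConcaveOn ℝ Set.univ φ)
    (hint : ∀ v : ℝ, 0 < v → Integrable (fun x : ℝ => φ x * exp (-x ^ 2 / (2 * v)))) :
    AntitoneOn (gaussianExpectation φ) (Set.Ioi 0) := by
  intro v (hv : 0 < v) w (hw : 0 < w) hvw
  have hsv : 0 < √v := sqrt_pos.2 hv
  have hsw : 0 < √w := sqrt_pos.2 hw
  rw [gaussianExpectation_eq_integral_comp_mul φ hv, gaussianExpectation_eq_integral_comp_mul φ hw]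
  refine mul_le_mul_of_nonneg_left (integral_le_integral_of_add_comp_neg_le
    (integrable_comp_mul_mul_exp_neg_sq_div_two hint hsw)
    (integrable_comp_mul_mul_exp_neg_sq_div_two hint hsv) fun u => ?_) (by positivity)
  have hratio : √v / √w * (√w * u) = √v * u := by field_simp
  have hφu := hφ.add_comp_neg_le_add_comp_neg_smul (s := √v / √w) (by positivity)
    ((div_le_one hsw).2 (sqrt_le_sqrt hvw)) (√w * u)
  simp only [smul_eq_mul, hratio, mul_neg, neg_sq] at hφu ⊢
  rw [← add_mul, ← add_mul]
  exact mul_le_mul_of_nonneg_right hφu (exp_pos _).le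

/-- For concave `φ` (integrable against Gaussians), the G-normal
expectation `sup_{σ₀ ≤ σ ≤ 1} E_{N(0,σ²t)}[φ]` is attained at `σ = σ₀`, i.e. equals
the Gaussian expectation with the smallest variance `σ₀²t`. -/
theorem G_normal_expectation_concave
    (σ₀ t : ℝ) (hσ0 : 0 < σ₀) (hσ1 : σ₀ ≤ 1) (ht : 0 < t)
    (φ : ℝ → ℝ) (hconc : ConcaveOn ℝ Set.univ φ)
    (hint : ∀ v : ℝ, 0 < v →
      Integrable (fun x : ℝ => φ x * Real.exp (-x ^ 2 / (2 * v)))) :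
    sSup ((fun σ : ℝ =>
        (1 / Real.sqrt (2 * π * σ ^ 2 * t)) *
          ∫ x : ℝ, φ x * Real.exp (-x ^ 2 / (2 * σ ^ 2 * t))) '' Set.Icc σ₀ 1) =
      (1 / Real.sqrt (2 * π * σ₀ ^ 2 * t)) *
        ∫ x : ℝ, φ x * Real.exp (-x ^ 2 / (2 * σ₀ ^ 2 * t)) := by
  have hvariance (σ : ℝ) : (1 / √(2 * π * σ ^ 2 * t)) *
      ∫ x : ℝ, φ x * exp (-x ^ 2 / (2 * σ ^ 2 * t)) = gaussianExpectation φ (σ ^ 2 * t) := by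
    simp only [gaussianExpectation, mul_assoc]
  simp only [hvariance]
  refine IsGreatest.csSup_eq ⟨⟨σ₀, ⟨le_rfl, hσ1⟩, rfl⟩, ?_⟩
  rintro _ ⟨σ, ⟨hσ₀σ, -⟩, rfl⟩
  have hσ : 0 < σ := hσ0.trans_le hσ₀σ
  exact hconc.gaussianExpectation_antitoneOn hint (show 0 < σ₀ ^ 2 * t by positivity)
    (show 0 < σ ^ 2 * t by positivity) (by gcongr)
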